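/- Let G be a groupoid with base P acting on a fiber bundle γ: E → P via an action ⇀, and let λ: G → k^× be a character. Form the kG-module k_λE with basis {x_E : E ∈ E} and action g·x_E = λ(g) x_{g⇀E} if e(g) = γ(E), and 0 otherwise. Then k_λE is a simple kG-module if and only if the action is transitive (the image γ(E) is a single equivalence class of the relation on P induced by G) and each fiber γ^{-1}(P) with P ∈ γ(E) has exactly one element. -/

import Mathlib

/-- A (finite) groupoid, presented algebraically: a set `A` of arrows over a base `P`,
with source `s`, target `e`, identities, a (total, junk-valued when undefined)
composition, and inverses. Composition is written left to right: `comp a b` is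
defined when `e a = s b`. -/
structure Gpd (P : Type) (A : Type) where
  s : A → P
  e : A → P
  id : P → A
  comp : A → A → A
  inv : A → A
  s_id : ∀ p, s (id p) = p
  e_id : ∀ p, e (id p) = p
  s_comp : ∀ a b, e a = s b → s (comp a b) = s a
  e_comp : ∀ a b, e a = s b → e (comp a b) = e b
  id_comp : ∀ a, comp (id (s a)) a = a
  comp_id : ∀ a, comp a (id (e a)) = a
  comp_assoc : ∀ a b c, e a = s b → e b = s c →
    comp (comp a b) c = comp a (comp b c)
  s_inv : ∀ a, s (inv a) = e a
  e_inv : ∀ a, e (inv a) = s a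
  inv_comp : ∀ a, comp (inv a) a = id (e a)
  comp_inv : ∀ a, comp a (inv a) = id (s a)

/-- A finite double groupoid: boxes `B`, horizontal arrows `H`, vertical arrows `V`,
points `P`; boxes carry a horizontal groupoid structure over `V`
(source = left side, target = right side) and a vertical groupoid structure over `H`
(source = top side, target = bottom side), compatible with the side groupoids,
satisfying the interchange law. -/
structure DoubleGroupoid where
  P : Type
  H : Type
  V : Type
  B : Type
  [fP : Fintype P]
  [fH : Fintype H]
  [fV : Fintype V]
  [fB : Fintype B]
  [dP : DecidableEq P]
  [dH : DecidableEq H]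
  [dV : DecidableEq V]
  [dB : DecidableEq B]
  /-- horizontal arrows: source `s` = left point, target `e` = right point -/
  gH : Gpd P H
  /-- vertical arrows: source `s` = top point, target `e` = bottom point -/
  gV : Gpd P V
  /-- horizontal composition of boxes; base `V`, source = left side, target = right side -/
  gBh : Gpd V B
  /-- vertical composition of boxes; base `H`, source = top side, target = bottom side -/
  gBv : Gpd H B
  corner_tl : ∀ A, gH.s (gBv.s A) = gV.s (gBh.s A)
  corner_tr : ∀ A, gH.e (gBv.s A) = gV.s (gBh.e A)
  corner_bl : ∀ A, gH.s (gBv.e A) = gV.e (gBh.s A)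
  corner_br : ∀ A, gH.e (gBv.e A) = gV.e (gBh.e A)
  t_hcomp : ∀ A B, gBh.e A = gBh.s B →
    gBv.s (gBh.comp A B) = gH.comp (gBv.s A) (gBv.s B)
  b_hcomp : ∀ A B, gBh.e A = gBh.s B →
    gBv.e (gBh.comp A B) = gH.comp (gBv.e A) (gBv.e B)
  l_vcomp : ∀ A B, gBv.e A = gBv.s B →
    gBh.s (gBv.comp A B) = gV.comp (gBh.s A) (gBh.s B)
  r_vcomp : ∀ A B, gBv.e A = gBv.s B →
    gBh.e (gBv.comp A B) = gV.comp (gBh.e A) (gBh.e B)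
  t_idh : ∀ g, gBv.s (gBh.id g) = gH.id (gV.s g)
  b_idh : ∀ g, gBv.e (gBh.id g) = gH.id (gV.e g)
  l_idv : ∀ x, gBh.s (gBv.id x) = gV.id (gH.s x)
  r_idv : ∀ x, gBh.e (gBv.id x) = gV.id (gH.e x)
  t_hinv : ∀ A, gBv.s (gBh.inv A) = gH.inv (gBv.s A)
  b_hinv : ∀ A, gBv.e (gBh.inv A) = gH.inv (gBv.e A)
  l_vinv : ∀ A, gBh.s (gBv.inv A) = gV.inv (gBh.s A)
  r_vinv : ∀ A, gBh.e (gBv.inv A) = gV.inv (gBh.e A)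
  hinv_vinv : ∀ A, gBh.inv (gBv.inv A) = gBv.inv (gBh.inv A)
  idh_vcomp : ∀ g h, gV.e g = gV.s h →
    gBv.comp (gBh.id g) (gBh.id h) = gBh.id (gV.comp g h)
  idv_hcomp : ∀ x y, gH.e x = gH.s y →
    gBh.comp (gBv.id x) (gBv.id y) = gBv.id (gH.comp x y)
  id_id : ∀ p, gBh.id (gV.id p) = gBv.id (gH.id p)
  interchange : ∀ A B C D,
    gBh.e A = gBh.s B → gBh.e C = gBh.s D →
    gBv.e A = gBv.s C → gBv.e B = gBv.s D →
    gBv.comp (gBh.comp A B) (gBh.comp C D) =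
      gBh.comp (gBv.comp A C) (gBv.comp B D)

namespace DoubleGroupoid

instance (T : DoubleGroupoid) : Fintype T.P := T.fP
instance (T : DoubleGroupoid) : Fintype T.H := T.fH
instance (T : DoubleGroupoid) : Fintype T.V := T.fV
instance (T : DoubleGroupoid) : Fintype T.B := T.fB
instance (T : DoubleGroupoid) : DecidableEq T.P := T.dP
instance (T : DoubleGroupoid) : DecidableEq T.H := T.dH
instance (T : DoubleGroupoid) : DecidableEq T.V := T.dV
instance (T : DoubleGroupoid) : DecidableEq T.B := T.dB

variable (T : DoubleGroupoid)

/-- top side of a box -/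
def top (A : T.B) : T.H := T.gBv.s A
/-- bottom side of a box -/
def bot (A : T.B) : T.H := T.gBv.e A
/-- left side of a box -/
def left (A : T.B) : T.V := T.gBh.s A
/-- right side of a box -/
def right (A : T.B) : T.V := T.gBh.e A

/-- horizontal composition -/
def hcomp (A B : T.B) : T.B := T.gBh.comp A B
/-- vertical composition ("A over B") -/
def vcomp (A B : T.B) : T.B := T.gBv.comp A B
/-- horizontal inverse -/
def hinv (A : T.B) : T.B := T.gBh.inv A
/-- vertical inverse -/
def vinv (A : T.B) : T.B := T.gBv.inv A
/-- total inverse `A⁻¹ = (Aʰ)ᵛ` -/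
def tinv (A : T.B) : T.B := T.gBv.inv (T.gBh.inv A)

/-- top-left vertex -/
def tl (A : T.B) : T.P := T.gH.s (T.top A)
/-- top-right vertex -/
def tr (A : T.B) : T.P := T.gH.e (T.top A)
/-- bottom-left vertex -/
def bl (A : T.B) : T.P := T.gH.s (T.bot A)
/-- bottom-right vertex -/
def br (A : T.B) : T.P := T.gH.e (T.bot A)
/-- right-top vertex (equal to `tr` by the corner compatibilities) -/
def rt (A : T.B) : T.P := T.gV.s (T.right A)
/-- right-bottom vertex -/
def rb (A : T.B) : T.P := T.gV.e (T.right A)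
/-- left-top vertex -/
def lt (A : T.B) : T.P := T.gV.s (T.left A)
/-- left-bottom vertex -/
def lb (A : T.B) : T.P := T.gV.e (T.left A)

/-- upper-left corner function: number of boxes with the same left and top sides -/
noncomputable def ulc (A : T.B) : ℕ :=
  Nat.card {U : T.B // T.left U = T.left A ∧ T.top U = T.top A}
/-- upper-right corner function: number of boxes with the same right and top sides -/
noncomputable def urc (A : T.B) : ℕ :=
  Nat.card {U : T.B // T.right U = T.right A ∧ T.top U = T.top A}
/-- lower-left corner function: number of boxes with the same left and bottom sides -/
noncomputable def llc (A : T.B) : ℕ :=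
  Nat.card {U : T.B // T.left U = T.left A ∧ T.bot U = T.bot A}
/-- lower-right corner function: number of boxes with the same right and bottom sides -/
noncomputable def lrc (A : T.B) : ℕ :=
  Nat.card {U : T.B // T.right U = T.right A ∧ T.bot U = T.bot A}

/-- the double identity box `Θ_P` at a point -/
def thetaBox (p : T.P) : T.B := T.gBv.id (T.gH.id p)

/-- the filling condition: every compatible pair (right side, top side) bounds a box -/
def Filling : Prop :=
  ∀ (g : T.V) (x : T.H), T.gH.e x = T.gV.s g →
    ∃ A : T.B, T.top A = x ∧ T.right A = g

/-- membership in the core groupoid `D`: the left and bottom sides are identities -/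
def isCoreD (D : T.B) : Prop :=
  T.left D = T.gV.id (T.gV.s (T.left D)) ∧ T.bot D = T.gH.id (T.gH.s (T.bot D))

/-- membership in the core groupoid `E`: the right and top sides are identities -/
def isCoreE (E : T.B) : Prop :=
  T.right E = T.gV.id (T.gV.s (T.right E)) ∧ T.top E = T.gH.id (T.gH.s (T.top E))

/-- `θ(p)`: the number of boxes whose left and bottom sides are identities at `p` -/
noncomputable def thetaLB (p : T.P) : ℕ :=
  Nat.card {U : T.B // T.left U = T.gV.id p ∧ T.bot U = T.gH.id p}

end DoubleGroupoid

open scoped Classical in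
/-- the operator by which an arrow `g` of a groupoid `G` acts on the module `k_λE`:
`g ⋅ x_E = λ(g) x_{g ⇀ E}` if `e(g) = γ(E)`, and `0` otherwise. -/
noncomputable def rho (k : Type) [Field k] {P A E : Type} (G : Gpd P A)
    (γ : E → P) (act : A → E → E) (lam : A → kˣ) (g : A) :
    (E →₀ k) →ₗ[k] (E →₀ k) :=
  Finsupp.lsum k fun x => LinearMap.toSpanSingleton k (E →₀ k)
    ((if G.e g = γ x then (lam g : k) else 0) • Finsupp.single (act g x) (1 : k))

/-
An arrow `g` maps the fiber over `e g` into the fiber over `s g` and kills the other basis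
vectors, so two submodules are always invariant: the vectors supported over a connected component
of the base, and the vectors whose coefficients sum to zero on every fiber. Simplicity rules out
both, which forces transitivity and singleton fibers. Conversely, when `γ` is injective with image
a single component, an arrow sends any vector `f` with `f x ≠ 0` to a nonzero multiple of the
basis vector at any prescribed point, so a nonzero invariant submodule contains the whole basis.
-/

def IsSimpleRep {R M ι : Type*} [Semiring R] [AddCommMonoid M] [Module R M]
    (ρ : ι → M →ₗ[R] M) : Prop :=
  (⊤ : Submodule R M) ≠ ⊥ ∧ ∀ N : Submodule R M, (∀ i, N.map (ρ i) ≤ N) → N = ⊥ ∨ N = ⊤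

namespace IsSimpleRep

variable {R M ι : Type*} [Semiring R] [AddCommMonoid M] [Module R M] {ρ : ι → M →ₗ[R] M}

theorem eq_top (h : IsSimpleRep ρ) {N : Submodule R M} (hN : ∀ i, N.map (ρ i) ≤ N)
    (hbot : N ≠ ⊥) : N = ⊤ :=
  (h.2 N hN).resolve_left hbot

theorem nonempty_of_finsupp {E : Type*} {ρ : ι → (E →₀ R) →ₗ[R] (E →₀ R)} (h : IsSimpleRep ρ) :
    Nonempty E := by
  by_contra hE
  have : IsEmpty E := not_nonempty_iff.mp hE
  exact h.1 Submodule.eq_bot_of_subsingleton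

end IsSimpleRep

namespace Gpd

variable {P A : Type} (G : Gpd P A)

def orbit (p : P) : Set P := {q | ∃ g, G.s g = p ∧ G.e g = q}

theorem mem_orbit_self (p : P) : p ∈ G.orbit p :=
  ⟨G.id p, G.s_id p, G.e_id p⟩

theorem s_mem_orbit {p : P} {h : A} (hh : G.e h ∈ G.orbit p) : G.s h ∈ G.orbit p := by
  obtain ⟨g, rfl, hg⟩ := hh
  have hc : G.e g = G.s (G.inv h) := by rw [G.s_inv, hg]
  exact ⟨G.comp g (G.inv h), G.s_comp _ _ hc, by rw [G.e_comp _ _ hc, G.e_inv]⟩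

theorem exists_arrow_of_mem_orbit {p q r : P} (hq : q ∈ G.orbit p) (hr : r ∈ G.orbit p) :
    ∃ g, G.s g = r ∧ G.e g = q := by
  obtain ⟨g₁, hs₁, rfl⟩ := hq
  obtain ⟨g₂, hs₂, rfl⟩ := hr
  have hc : G.e (G.inv g₂) = G.s g₁ := by rw [G.e_inv, hs₂, hs₁]
  exact ⟨G.comp (G.inv g₂) g₁, by rw [G.s_comp _ _ hc, G.s_inv], G.e_comp _ _ hc⟩

end Gpd

theorem Function.injective_iff_card_fiber_eq_one {E P : Type} (γ : E → P) :
    Function.Injective γ ↔ ∀ p ∈ Set.range γ, Nat.card {x : E // γ x = p} = 1 := by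
  refine ⟨fun hγ => ?_, fun h x y hxy => ?_⟩
  · rintro _ ⟨x, rfl⟩
    exact Nat.card_eq_one_iff_exists.mpr ⟨⟨x, rfl⟩, fun y => Subtype.ext (hγ y.2)⟩
  · have := (Nat.card_eq_one_iff_unique.mp (h (γ y) ⟨y, rfl⟩)).1
    exact congrArg Subtype.val (Subsingleton.elim (⟨x, hxy⟩ : {z // γ z = γ y}) ⟨y, rfl⟩)

section FiberSums

open scoped Classical

variable {k E P : Type} [CommRing k] (γ : E → P)

noncomputable def fiberSum (p : P) : (E →₀ k) →ₗ[k] k :=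
  Finsupp.linearCombination k fun x => if γ x = p then 1 else 0

noncomputable def zeroFiberSums : Submodule k (E →₀ k) :=
  ⨅ p, LinearMap.ker (fiberSum γ p)

variable {γ}

theorem fiberSum_single (p : P) (x : E) (c : k) :
    fiberSum γ p (Finsupp.single x c) = if γ x = p then c else 0 := by
  simp [fiberSum, Finsupp.linearCombination_single]

theorem mem_zeroFiberSums {f : E →₀ k} : f ∈ zeroFiberSums γ ↔ ∀ p, fiberSum γ p f = 0 := by
  simp [zeroFiberSums]

theorem single_sub_single_mem_zeroFiberSums {y z : E} (h : γ y = γ z) :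
    Finsupp.single y (1 : k) - Finsupp.single z 1 ∈ zeroFiberSums γ := by
  simp [mem_zeroFiberSums, fiberSum_single, h]

theorem single_notMem_zeroFiberSums [Nontrivial k] (x : E) :
    Finsupp.single x (1 : k) ∉ zeroFiberSums γ := by
  simp [mem_zeroFiberSums, fiberSum_single]

end FiberSums

section Rho

open scoped Classical

variable {k P A E : Type} [Field k] {G : Gpd P A} {γ : E → P} {act : A → E → E} {lam : A → kˣ}

theorem rho_single (g : A) (x : E) (c : k) :
    rho k G γ act lam g (Finsupp.single x c) =
      if G.e g = γ x then Finsupp.single (act g x) (lam g * c) else 0 := by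
  split_ifs with hg <;> simp [rho, hg, Finsupp.smul_single, mul_comm]

theorem fiberSum_rho (hγ : ∀ g x, G.e g = γ x → γ (act g x) = G.s g) (g : A) (q : P)
    (f : E →₀ k) :
    fiberSum γ q (rho k G γ act lam g f) =
      if G.s g = q then lam g * fiberSum γ (G.e g) f else 0 := by
  induction f using Finsupp.induction_linear with
  | zero => simp
  | add f₁ f₂ h₁ h₂ => split_ifs at h₁ h₂ ⊢ <;> simp [h₁, h₂, mul_add]
  | single x c =>
    rw [rho_single, fiberSum_single]
    by_cases hg : G.e g = γ x
    · simp only [hg, if_true, fiberSum_single, hγ g x hg]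
    · simp [hg, Ne.symm hg]

theorem map_rho_zeroFiberSums_le (hγ : ∀ g x, G.e g = γ x → γ (act g x) = G.s g) (g : A) :
    (zeroFiberSums γ).map (rho k G γ act lam g) ≤ zeroFiberSums γ := by
  refine Submodule.map_le_iff_le_comap.mpr fun f hf => ?_
  rw [Submodule.mem_comap, mem_zeroFiberSums]
  intro q
  rw [fiberSum_rho hγ, mem_zeroFiberSums.mp hf, mul_zero, ite_self]

theorem map_rho_supported_le {S : Set E} (hS : ∀ g x, G.e g = γ x → x ∈ S → act g x ∈ S)
    (g : A) :
    (Finsupp.supported k k S).map (rho k G γ act lam g) ≤ Finsupp.supported k k S := by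
  rw [Finsupp.supported_eq_span_single, Submodule.map_span, Submodule.span_le]
  rintro _ ⟨_, ⟨x, hx, rfl⟩, rfl⟩
  rw [rho_single]
  split_ifs with hg
  · rw [← Finsupp.smul_single_one]
    exact Submodule.smul_mem _ _ (Submodule.subset_span ⟨act g x, hS g x hg hx, rfl⟩)
  · exact Submodule.zero_mem _

theorem rho_eq_single_of_injective (hγ : Function.Injective γ) {g : A} {x : E}
    (hg : G.e g = γ x) (f : E →₀ k) :
    rho k G γ act lam g f = Finsupp.single (act g x) (lam g * f x) := by
  induction f using Finsupp.induction_linear with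
  | zero => simp
  | add f₁ f₂ h₁ h₂ => simp [h₁, h₂, mul_add]
  | single y c =>
    rw [rho_single]
    by_cases hy : y = x
    · subst hy
      simp [hg]
    · simp [hg, hγ.ne_iff.mpr (Ne.symm hy), hy]

end Rho

section Simplicity

variable {k P A E : Type} [Field k] {G : Gpd P A} {γ : E → P} {act : A → E → E} {lam : A → kˣ}

theorem injective_of_isSimpleRep (hγ : ∀ g x, G.e g = γ x → γ (act g x) = G.s g)
    (h : IsSimpleRep (rho k G γ act lam)) : Function.Injective γ := by
  intro y z hyz
  by_contra hne
  have hbot : zeroFiberSums (k := k) γ ≠ ⊥ := by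
    rw [Submodule.ne_bot_iff]
    refine ⟨_, single_sub_single_mem_zeroFiberSums hyz, sub_ne_zero.mpr ?_⟩
    exact (Finsupp.single_left_injective one_ne_zero).ne hne
  have htop := h.eq_top (map_rho_zeroFiberSums_le hγ) hbot
  exact single_notMem_zeroFiberSums (k := k) y (htop ▸ Submodule.mem_top)

theorem range_eq_orbit_of_isSimpleRep (hγ : ∀ g x, G.e g = γ x → γ (act g x) = G.s g)
    (h : IsSimpleRep (rho k G γ act lam)) (x₀ : E) : Set.range γ = G.orbit (γ x₀) := by
  refine subset_antisymm ?_ ?_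
  · have hS : ∀ g x, G.e g = γ x → x ∈ γ ⁻¹' G.orbit (γ x₀) → act g x ∈ γ ⁻¹' G.orbit (γ x₀) :=
      fun g x hg hx => by
        rw [Set.mem_preimage, hγ g x hg]
        exact G.s_mem_orbit (hg ▸ hx)
    have hbot : Finsupp.supported k k (γ ⁻¹' G.orbit (γ x₀)) ≠ ⊥ := by
      rw [Submodule.ne_bot_iff]
      exact ⟨_, Finsupp.single_mem_supported k 1 (G.mem_orbit_self (γ x₀)),
        Finsupp.single_ne_zero.mpr one_ne_zero⟩
    have htop := h.eq_top (map_rho_supported_le hS) hbot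
    rintro _ ⟨z, rfl⟩
    have hz : Finsupp.single z (1 : k) ∈ Finsupp.supported k k (γ ⁻¹' G.orbit (γ x₀)) :=
      htop ▸ Submodule.mem_top
    simpa [Finsupp.mem_supported] using hz
  · rintro q ⟨g, hs, rfl⟩
    have he : G.e (G.inv g) = γ x₀ := by rw [G.e_inv, hs]
    exact ⟨act (G.inv g) x₀, by rw [hγ _ _ he, G.s_inv]⟩

theorem isSimpleRep_of_injective (hγ : ∀ g x, G.e g = γ x → γ (act g x) = G.s g)
    (hinj : Function.Injective γ) {p : P} (hrange : Set.range γ = G.orbit p) :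
    IsSimpleRep (rho k G γ act lam) := by
  obtain ⟨x₀, -⟩ : p ∈ Set.range γ := hrange ▸ G.mem_orbit_self p
  have : Nonempty E := ⟨x₀⟩
  refine ⟨top_ne_bot, fun N hN => ?_⟩
  refine or_iff_not_imp_left.mpr fun hbot => ?_
  obtain ⟨f, hfN, hf0⟩ := (Submodule.ne_bot_iff N).mp hbot
  obtain ⟨x, hx⟩ : ∃ x, f x ≠ 0 := by simpa [Finsupp.ext_iff] using hf0
  have hmem : ∀ z, γ z ∈ G.orbit p := fun z => hrange ▸ ⟨z, rfl⟩
  have hsingle : ∀ y, Finsupp.single y (1 : k) ∈ N := by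
    intro y
    obtain ⟨g, hs, he⟩ := G.exists_arrow_of_mem_orbit (hmem x) (hmem y)
    have hy : act g x = y := hinj (by rw [hγ g x he, hs])
    have hgf := hN g (Submodule.mem_map_of_mem hfN)
    rw [rho_eq_single_of_injective hinj he, hy, ← Finsupp.smul_single_one] at hgf
    have hc : (lam g : k) * f x ≠ 0 := mul_ne_zero (Units.ne_zero _) hx
    have := N.smul_mem (↑(lam g) * f x)⁻¹ hgf
    rwa [smul_smul, inv_mul_cancel₀ hc, one_smul] at this
  rw [eq_top_iff, ← Finsupp.basisSingleOne.span_eq, Submodule.span_le, Finsupp.coe_basisSingleOne]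
  rintro _ ⟨y, rfl⟩
  exact hsingle y

end Simplicity

theorem stmt16_general (k P A E : Type) [Field k]
    (G : Gpd P A) (γ : E → P) (act : A → E → E)
    (hγ : ∀ g x, G.e g = γ x → γ (act g x) = G.s g)
    (lam : A → kˣ) :
    (((⊤ : Submodule k (E →₀ k)) ≠ ⊥) ∧
      ∀ N : Submodule k (E →₀ k),
        (∀ g : A, N.map (rho k G γ act lam g) ≤ N) → N = ⊥ ∨ N = ⊤) ↔
    ((∃ p : P, Set.range γ = {q | ∃ g : A, G.s g = p ∧ G.e g = q}) ∧
      ∀ p ∈ Set.range γ, Nat.card {x : E // γ x = p} = 1) := by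
  change IsSimpleRep (rho k G γ act lam) ↔ (∃ p, Set.range γ = G.orbit p) ∧ _
  rw [← Function.injective_iff_card_fiber_eq_one]
  refine ⟨fun h => ?_, fun ⟨⟨p, hp⟩, hinj⟩ => isSimpleRep_of_injective hγ hinj hp⟩
  obtain ⟨x₀⟩ := h.nonempty_of_finsupp
  exact ⟨⟨γ x₀, range_eq_orbit_of_isSimpleRep hγ h x₀⟩, injective_of_isSimpleRep hγ h⟩

/-- `k_λE` is a simple `kG`-module iff the action is transitive
(the image of `γ` is a single equivalence class of the relation induced by `G`
on the base) and every fiber over a point of the image is a singleton. -/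
theorem stmt16 (k P A E : Type) [Field k] [Finite P] [Finite A] [Finite E]
    (G : Gpd P A) (γ : E → P) (act : A → E → E)
    (hγ : ∀ g x, G.e g = γ x → γ (act g x) = G.s g)
    (hid : ∀ x, act (G.id (γ x)) x = x)
    (hact : ∀ g h x, G.e g = G.s h → G.e h = γ x →
      act (G.comp g h) x = act g (act h x))
    (lam : A → kˣ)
    (hlam : ∀ g h, G.e g = G.s h → lam (G.comp g h) = lam g * lam h) :
    (((⊤ : Submodule k (E →₀ k)) ≠ ⊥) ∧
      ∀ N : Submodule k (E →₀ k),
        (∀ g : A, N.map (rho k G γ act lam g) ≤ N) → N = ⊥ ∨ N = ⊤) ↔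
    ((∃ p : P, Set.range γ = {q | ∃ g : A, G.s g = p ∧ G.e g = q}) ∧
      ∀ p ∈ Set.range γ, Nat.card {x : E // γ x = p} = 1) :=
  stmt16_general k P A E G γ act hγ lam
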